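/- arXiv:2212.11593 — 3 statements merged into one kernel-verified Lean document; each statement's English description precedes it below -/
import Mathlib

section
/- For every unit quaternion q with q ≠ -1, one has U(R(q)) = q. -/
open scoped Classical in
/-- The UQ operator `U : ℝ³ → ℍ`, `U(r) = [cos(‖r‖/2), (r/‖r‖)·sin(‖r‖/2)]` for `r ≠ 0`, `U(0) = 1`. -/
noncomputable def UQ (r : EuclideanSpace ℝ (Fin 3)) : Quaternion ℝ :=
  if r = 0 then 1 else
    ⟨Real.cos (‖r‖ / 2),
     Real.sin (‖r‖ / 2) / ‖r‖ * r 0,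
     Real.sin (‖r‖ / 2) / ‖r‖ * r 1,
     Real.sin (‖r‖ / 2) / ‖r‖ * r 2⟩

/-- The rotation operator `R : ℍ → ℝ³`,
`R(q) = (2·arccos(q₀)/√(q₁²+q₂²+q₃²))·(q₁,q₂,q₃)` if `q₀² ≠ 1`, and `0` otherwise. -/
noncomputable def Rop (q : Quaternion ℝ) : EuclideanSpace ℝ (Fin 3) :=
  if q.re ^ 2 = 1 then 0 else
    (2 * Real.arccos q.re / Real.sqrt (q.imI ^ 2 + q.imJ ^ 2 + q.imK ^ 2)) •
      (WithLp.equiv 2 (Fin 3 → ℝ)).symm ![q.imI, q.imJ, q.imK]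

/-!
Write `q = [cos θ, v]` with `θ = arccos q₀ ∈ (0, π)` and `v` the imaginary part. For a unit
quaternion `‖v‖ = √(1 - q₀²) = sin θ`, so `R(q) = (2θ/‖v‖)·v` has norm `2θ`, and `U` turns it back
into `[cos θ, (sin θ/‖v‖)·v] = q`. When `q₀² = 1` the imaginary part vanishes, so `q = ±1`, and
`q = 1` is sent to `U(0) = 1`.
-/

open Real

namespace Quaternion

noncomputable def imVec (q : Quaternion ℝ) : EuclideanSpace ℝ (Fin 3) :=
  (WithLp.equiv 2 (Fin 3 → ℝ)).symm ![q.imI, q.imJ, q.imK]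

theorem norm_imVec (q : Quaternion ℝ) :
    ‖q.imVec‖ = √(q.imI ^ 2 + q.imJ ^ 2 + q.imK ^ 2) := by
  simp [imVec, EuclideanSpace.norm_eq, Fin.sum_univ_three]

theorem re_sq_add_norm_imVec_sq (q : Quaternion ℝ) : q.re ^ 2 + ‖q.imVec‖ ^ 2 = ‖q‖ ^ 2 := by
  rw [norm_imVec, sq_sqrt (by positivity), sq ‖q‖, ← normSq_eq_norm_mul_self, normSq_def']
  ring

theorem sin_arccos_re {q : Quaternion ℝ} (hq : ‖q‖ = 1) : sin (arccos q.re) = ‖q.imVec‖ := by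
  have h := re_sq_add_norm_imVec_sq q
  rw [hq, one_pow] at h
  rw [sin_arccos, show 1 - q.re ^ 2 = ‖q.imVec‖ ^ 2 by linarith, sqrt_sq (norm_nonneg _)]

theorem eq_one_or_eq_neg_one_of_re_sq_eq_one {q : Quaternion ℝ} (hq : ‖q‖ = 1) (hre : q.re ^ 2 = 1) :
    q = 1 ∨ q = -1 := by
  have him : q.imVec = 0 := by
    have := re_sq_add_norm_imVec_sq q
    rw [hre, hq] at this
    simpa using this
  simp only [imVec, WithLp.equiv_symm_apply, WithLp.toLp_eq_zero, Matrix.cons_eq_zero_iff,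
    Matrix.zero_empty, and_true] at him
  obtain ⟨hI, hJ, hK⟩ := him
  rcases sq_eq_one_iff.mp hre with h | h
  · exact Or.inl (by ext <;> simp [*])
  · exact Or.inr (by ext <;> simp [*])

end Quaternion

open Quaternion

theorem Rop_eq_smul_imVec {q : Quaternion ℝ} (hre : q.re ^ 2 ≠ 1) :
    Rop q = (2 * arccos q.re / ‖q.imVec‖) • q.imVec := by
  rw [Rop, if_neg hre, norm_imVec]
  rfl

theorem UQ_two_mul_div_norm_smul {θ : ℝ} (hθ : 0 < θ) {v : EuclideanSpace ℝ (Fin 3)} (hv : v ≠ 0) :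
    UQ ((2 * θ / ‖v‖) • v) = ⟨cos θ, sin θ / ‖v‖ * v 0, sin θ / ‖v‖ * v 1, sin θ / ‖v‖ * v 2⟩ := by
  have hvpos : 0 < ‖v‖ := norm_pos_iff.mpr hv
  have hnorm : ‖(2 * θ / ‖v‖) • v‖ = 2 * θ := by
    rw [norm_smul, norm_div, norm_mul, Real.norm_two, Real.norm_of_nonneg hθ.le, norm_norm,
      div_mul_cancel₀ _ hvpos.ne']
  have hne : (2 * θ / ‖v‖) • v ≠ 0 := by
    rw [← norm_ne_zero_iff, hnorm]
    positivity
  simp only [UQ, hne, ↓reduceIte, hnorm]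
  ext <;> simp only [PiLp.smul_apply, smul_eq_mul] <;> field_simp

/-- For every unit quaternion `q` with `q ≠ -1`, one has `U(R(q)) = q`. -/
theorem UQ_Rop (q : Quaternion ℝ) (hq : ‖q‖ = 1) (hne : q ≠ -1) :
    UQ (Rop q) = q := by
  by_cases hre : q.re ^ 2 = 1
  · obtain rfl | rfl := eq_one_or_eq_neg_one_of_re_sq_eq_one hq hre
    · simp [Rop, UQ]
    · exact absurd rfl hne
  have hsum : q.re ^ 2 + ‖q.imVec‖ ^ 2 = 1 := by rw [re_sq_add_norm_imVec_sq, hq, one_pow]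
  have him : q.imVec ≠ 0 := fun h => hre (by simpa [h] using hsum)
  obtain ⟨hre_ge, hre_le⟩ := abs_le.mp (sq_le_one_iff_abs_le_one q.re |>.mp (by nlinarith))
  have hθ : 0 < arccos q.re := arccos_pos.mpr (lt_of_le_of_ne hre_le fun h => hre (by simp [h]))
  rw [Rop_eq_smul_imVec hre, UQ_two_mul_div_norm_smul hθ him, sin_arccos_re hq,
    cos_arccos hre_ge hre_le]
  ext <;> simp only [div_self (norm_ne_zero_iff.mpr him), one_mul] <;> rfl
end

section
/- For every vector r in ℝ³ with ‖r‖₂ < 2π, one has R(U(r)) = r. -/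
/-!
For `r ≠ 0` write `U(r) = [cos θ, sin θ · u]` with half-angle `θ = ‖r‖/2` and unit
axis `u = r/‖r‖`. When `0 < θ < π` we have `sin θ > 0`, so `√(q₁² + q₂² + q₃²) = sin θ`, and
`cos θ ≠ ±1` and `arccos (cos θ) = θ`; hence `R(U(r)) = 2θ · u = r`.
-/

noncomputable def angleAxisQuat (θ : ℝ) (u : EuclideanSpace ℝ (Fin 3)) : Quaternion ℝ :=
  ⟨Real.cos θ, Real.sin θ * u 0, Real.sin θ * u 1, Real.sin θ * u 2⟩

theorem UQ_eq_angleAxisQuat {r : EuclideanSpace ℝ (Fin 3)} (hr : r ≠ 0) :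
    UQ r = angleAxisQuat (‖r‖ / 2) (‖r‖⁻¹ • r) := by
  simp only [UQ, hr, ↓reduceIte, angleAxisQuat, PiLp.smul_apply, smul_eq_mul, div_eq_mul_inv,
    mul_assoc]
  -- the sides differ only in the ascription `Quaternion ℝ` vs `QuaternionAlgebra ℝ (-1) 0 (-1)`
  rfl

theorem EuclideanSpace.sum_sq_fin_three (u : EuclideanSpace ℝ (Fin 3)) :
    u 0 ^ 2 + u 1 ^ 2 + u 2 ^ 2 = ‖u‖ ^ 2 := by
  rw [EuclideanSpace.real_norm_sq_eq, Fin.sum_univ_three]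

theorem Rop_angleAxisQuat {θ : ℝ} {u : EuclideanSpace ℝ (Fin 3)} (hθ₀ : 0 < θ)
    (hθπ : θ < Real.pi) (hu : ‖u‖ = 1) : Rop (angleAxisQuat θ u) = (2 * θ) • u := by
  have hsin : 0 < Real.sin θ := Real.sin_pos_of_pos_of_lt_pi hθ₀ hθπ
  have hcos : Real.cos θ ^ 2 ≠ 1 := by
    nlinarith [Real.sin_sq_add_cos_sq θ]
  have himag : (Real.sin θ * u 0) ^ 2 + (Real.sin θ * u 1) ^ 2 + (Real.sin θ * u 2) ^ 2
      = Real.sin θ ^ 2 := by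
    have hunit : u 0 ^ 2 + u 1 ^ 2 + u 2 ^ 2 = 1 := by
      rw [EuclideanSpace.sum_sq_fin_three, hu, one_pow]
    linear_combination Real.sin θ ^ 2 * hunit
  simp only [Rop, angleAxisQuat, if_neg hcos, himag, Real.sqrt_sq hsin.le,
    Real.arccos_cos hθ₀.le hθπ.le]
  ext i
  fin_cases i <;> simp [PiLp.smul_apply] <;> field_simp

/-- For every vector `r ∈ ℝ³` with `‖r‖₂ < 2π`, one has `R(U(r)) = r`. -/
theorem Rop_UQ (r : EuclideanSpace ℝ (Fin 3)) (hr : ‖r‖ < 2 * Real.pi) :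
    Rop (UQ r) = r := by
  by_cases h : r = 0
  · simp [h, UQ, Rop, Quaternion.re_one]
  · have hnorm : ‖r‖ ≠ 0 := norm_ne_zero_iff.mpr h
    have hunit : ‖‖r‖⁻¹ • r‖ = 1 := by
      rw [norm_smul, norm_inv, norm_norm, inv_mul_cancel₀ hnorm]
    rw [UQ_eq_angleAxisQuat h, Rop_angleAxisQuat (by positivity) (by linarith) hunit,
      smul_smul, mul_div_cancel₀ _ two_ne_zero, mul_inv_cancel₀ hnorm, one_smul]
end

section
/- For every motion x = [r, t] with r, t ∈ ℝ³, the dual quaternion Û(x) = U(r) + (1/2)·U(r)·t̃·ε is a unit dual quaternion, where t̃ = [0, t] is the vector quaternion with imaginary part t. -/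
/-- The vector quaternion `t̃ = [0, t]` associated with `t ∈ ℝ³`. -/
noncomputable def tq (t : EuclideanSpace ℝ (Fin 3)) : Quaternion ℝ := ⟨0, t 0, t 1, t 2⟩

/-- The UDQ operator: the dual quaternion `Û(x) = U(r) + (1/2)·U(r)·t̃·ε` of a motion `x = [r, t]`. -/
noncomputable def Uhat (r t : EuclideanSpace ℝ (Fin 3)) : DualNumber (Quaternion ℝ) :=
  (UQ r, (2⁻¹ : ℝ) • (UQ r * tq t))

/-!
The rotation part is an exponential, `U(r) = exp (r̃ / 2)`, of a quaternion with zero real part,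
so it has norm `‖exp 0‖ = 1`. For the dual part `q t̃ / 2` with `q = U(r)`, the orthogonality
identity reduces to `q (-t̃) q* + q t̃ q* = 0`, because `t̃* = -t̃`.
-/

open NormedSpace Quaternion

section tq

variable (t : EuclideanSpace ℝ (Fin 3))

@[simp] lemma re_tq : (tq t).re = 0 := rfl
@[simp] lemma imI_tq : (tq t).imI = t 0 := rfl
@[simp] lemma imJ_tq : (tq t).imJ = t 1 := rfl
@[simp] lemma imK_tq : (tq t).imK = t 2 := rfl

@[simp] lemma tq_zero : tq 0 = 0 := by ext <;> simp

lemma star_tq : star (tq t) = -tq t :=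
  star_eq_neg.mpr (re_tq t)

@[simp] lemma norm_tq : ‖tq t‖ = ‖t‖ := by
  rw [← sq_eq_sq₀ (norm_nonneg _) (norm_nonneg _), sq, ← normSq_eq_norm_mul_self, normSq_def',
    EuclideanSpace.norm_sq_eq, Fin.sum_univ_three]
  simp

end tq

lemma UQ_eq_exp (r : EuclideanSpace ℝ (Fin 3)) : UQ r = exp ((2⁻¹ : ℝ) • tq r) := by
  by_cases hr : r = 0
  · simp [UQ, hr]
  · have hq : ‖(2⁻¹ : ℝ) • tq r‖ = ‖r‖ / 2 := by
      rw [norm_smul, norm_tq, Real.norm_of_nonneg (by norm_num), inv_mul_eq_div]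
    rw [exp_of_re_eq_zero _ (by simp), hq]
    simp only [UQ, hr]
    ext <;> simp <;> field_simp

lemma norm_UQ (r : EuclideanSpace ℝ (Fin 3)) : ‖UQ r‖ = 1 := by
  rw [UQ_eq_exp, norm_exp, re_smul, re_tq, smul_zero, exp_zero, norm_one]

lemma mul_star_mul_add_mul_mul_star_eq_zero {A : Type*} [Ring A] [StarRing A] (q v : A)
    (hv : star v = -v) : q * star (q * v) + q * v * star q = 0 := by
  rw [star_mul, hv, neg_mul, mul_neg, mul_assoc, neg_add_cancel]

/-- For every motion `x = [r, t]`, the dual quaternion `Û(x) = U(r) + (1/2)·U(r)·t̃·ε` is a unit dual quaternion: its standard part is a unit quaternion and the standard and dual parts satisfy the orthogonality identity. -/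
theorem Uhat_is_unit_dual_quaternion (r t : EuclideanSpace ℝ (Fin 3)) :
    ‖(Uhat r t).fst‖ = 1 ∧
      (Uhat r t).fst * star (Uhat r t).snd + (Uhat r t).snd * star (Uhat r t).fst = 0 := by
  refine ⟨norm_UQ r, ?_⟩
  change UQ r * star ((2⁻¹ : ℝ) • (UQ r * tq t)) + (2⁻¹ : ℝ) • (UQ r * tq t) * star (UQ r) = 0
  rw [Quaternion.star_smul, mul_smul_comm, smul_mul_assoc, ← smul_add,
    mul_star_mul_add_mul_mul_star_eq_zero _ _ (star_tq t), smul_zero]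
end
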